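/- Let n be a positive integer and y an integer with 0 ≤ y ≤ n. Then the posterior expectation of p₂ given Y = y satisfies E(p₂ | y) = [∫₀¹∫₀¹ p₂ (p₁p₂)^y (1-p₁p₂)^{n-y} dp₁ dp₂] / [∫₀¹∫₀¹ (p₁p₂)^y (1-p₁p₂)^{n-y} dp₁ dp₂] = (n-y+1) / ((n+2)(H_{n+1} - H_y)), where H_m is the m-th harmonic number (H₀ = 0). Equivalently, E(p₂|y) = μ_H{y+1, y+2, ..., n+1}/(n+2), where μ_H{a₁,...,a_N} = (N^{-1} Σ_{i=1}^N a_i^{-1})^{-1} is the harmonic mean. -/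

import Mathlib

/-- `H m` is the `m`-th harmonic number, with `H 0 = 0`. -/
noncomputable def H (m : ℕ) : ℝ := ∑ j ∈ Finset.range m, 1 / ((j : ℝ) + 1)

/-- The harmonic mean of a finite family of positive reals. -/
noncomputable def harmonicMean (s : Finset ℕ) (f : ℕ → ℝ) : ℝ :=
  (((s.card : ℝ))⁻¹ * ∑ i ∈ s, (f i)⁻¹)⁻¹

/-!
Expanding `(1 - p₁p₂) ^ m` binomially (with `m = n - y`), both iterated integrals become
alternating binomial sums `∑ₖ (-1)ᵏ (m choose k) f (y + k) = (-1)ᵐ Δᵐ f y`, with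
`f j = 1 / ((j + 2) (j + 1))` in the numerator and `f j = 1 / (j + 1)²` in the denominator.
Such sums obey the Pascal recursion `Sₘ₊₁ y = Sₘ y - Sₘ (y + 1)`, and so does the Beta value
`B(y + 1, m + 1) = y! m! / (y + m + 1)!`. Comparing initial values, the numerator is
`B(y + 1, m + 2)` and the denominator is `B(y + 1, m + 1) (H (y + m + 1) - H y)`; their quotient is
`(m + 1) / ((y + m + 2) (H (n + 1) - H y))`.
-/

open Finset Nat fwdDiff

section FwdDiff

variable {R : Type*} [CommRing R]

lemma fwdDiff_iter_succ_apply {M G : Type*} [AddCommMonoid M] [AddCommGroup G] (h : M)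
    (f : M → G) (m : ℕ) (y : M) :
    (Δ_[h])^[m + 1] f y = (Δ_[h])^[m] f (y + h) - (Δ_[h])^[m] f y := by
  rw [Function.iterate_succ_apply']
  rfl

lemma sum_range_neg_one_pow_mul_choose_mul (f : ℕ → R) (m y : ℕ) :
    ∑ k ∈ range (m + 1), (-1) ^ k * m.choose k * f (y + k) = (-1) ^ m * (Δ_[1])^[m] f y := by
  rw [fwdDiff_iter_eq_sum_shift, mul_sum]
  refine sum_congr rfl fun k hk => ?_
  have hsplit : (-1 : R) ^ m = (-1) ^ k * (-1) ^ (m - k) := by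
    rw [← pow_add, Nat.add_sub_cancel' (Nat.lt_succ_iff.mp (mem_range.mp hk))]
  have hsq : ((-1 : R) ^ (m - k)) ^ 2 = 1 := by rw [← pow_mul, pow_mul', neg_one_sq, one_pow]
  rw [hsplit, zsmul_eq_mul, smul_eq_mul, mul_one]
  push_cast
  linear_combination -((-1 : R) ^ k * m.choose k * f (y + k)) * hsq

lemma neg_one_pow_mul_fwdDiff_iter_eq {f : ℕ → R} {F : ℕ → ℕ → R} (h0 : ∀ y, F y 0 = f y)
    (hsucc : ∀ y m, F y (m + 1) = F y m - F (y + 1) m) (m y : ℕ) :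
    (-1) ^ m * (Δ_[1])^[m] f y = F y m := by
  induction m generalizing y with
  | zero => simp [h0]
  | succ m ih =>
    rw [hsucc, ← ih, ← ih, fwdDiff_iter_succ_apply]
    ring

end FwdDiff

noncomputable def betaNat (y m : ℕ) : ℝ := (y ! * m ! : ℝ) / (y + m + 1)!

lemma betaNat_pos (y m : ℕ) : 0 < betaNat y m := by
  unfold betaNat
  positivity

lemma betaNat_zero_right (y : ℕ) : betaNat y 0 = 1 / (y + 1) := by
  simp only [betaNat, add_zero, factorial_zero, cast_one, mul_one, factorial_succ, cast_mul]
  field_simp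
  push_cast
  ring

lemma betaNat_succ_right (y m : ℕ) : betaNat y (m + 1) = betaNat y m * (m + 1) / (y + m + 2) := by
  simp only [betaNat, ← add_assoc, factorial_succ (y + m + 1), factorial_succ m]
  push_cast
  field_simp
  ring

lemma betaNat_succ_left (y m : ℕ) : betaNat (y + 1) m = betaNat y m * (y + 1) / (y + m + 2) := by
  simp only [betaNat, add_right_comm y 1 m, factorial_succ (y + m + 1), factorial_succ y]
  push_cast
  field_simp
  ring

lemma betaNat_succ_right_eq_sub (y m : ℕ) :
    betaNat y (m + 1) = betaNat y m - betaNat (y + 1) m := by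
  rw [betaNat_succ_right, betaNat_succ_left]
  field_simp
  ring

lemma H_succ (m : ℕ) : H (m + 1) = H m + 1 / (m + 1) := sum_range_succ _ _

lemma fwdDiff_iter_one_div_succ_succ_mul_succ (m y : ℕ) :
    (-1) ^ m * (Δ_[1])^[m] (fun j : ℕ => 1 / (((j : ℝ) + 1 + 1) * ((j : ℝ) + 1))) y
      = betaNat y (m + 1) := by
  refine neg_one_pow_mul_fwdDiff_iter_eq (F := fun y m => betaNat y (m + 1)) (fun y => ?_)
    (fun y m => betaNat_succ_right_eq_sub y (m + 1)) m y
  rw [betaNat_succ_right, betaNat_zero_right]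
  field_simp
  ring

lemma fwdDiff_iter_one_div_succ_mul_succ (m y : ℕ) :
    (-1) ^ m * (Δ_[1])^[m] (fun j : ℕ => 1 / (((j : ℝ) + 1) * ((j : ℝ) + 1))) y
      = betaNat y m * (H (y + m + 1) - H y) := by
  refine neg_one_pow_mul_fwdDiff_iter_eq (F := fun y m => betaNat y m * (H (y + m + 1) - H y))
    (fun y => ?_) (fun y m => ?_) m y
  · rw [betaNat_zero_right, add_zero, H_succ]
    field_simp
    ring
  · rw [show y + 1 + m + 1 = y + m + 1 + 1 by ring, show y + (m + 1) + 1 = y + m + 1 + 1 by ring,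
      H_succ (y + m + 1), H_succ y, betaNat_succ_left, betaNat_succ_right]
    push_cast
    field_simp
    ring

lemma integral_integral_finsetSum {ι E : Type*} [NormedAddCommGroup E] [NormedSpace ℝ E]
    (s : Finset ι) (f : ι → ℝ → ℝ → E) (hf : ∀ i ∈ s, Continuous (Function.uncurry (f i)))
    (a b c d : ℝ) :
    ∫ x in a..b, ∫ t in c..d, ∑ i ∈ s, f i x t = ∑ i ∈ s, ∫ x in a..b, ∫ t in c..d, f i x t := by
  have hinner : ∀ x, ∫ t in c..d, ∑ i ∈ s, f i x t = ∑ i ∈ s, ∫ t in c..d, f i x t := fun x =>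
    intervalIntegral.integral_finsetSum fun i hi =>
      ((hf i hi).comp (Continuous.prodMk_right x)).intervalIntegrable c d
  simp_rw [hinner]
  exact intervalIntegral.integral_finsetSum fun i hi =>
    (intervalIntegral.continuous_parametric_intervalIntegral_of_continuous' (hf i hi) c d
      ).intervalIntegrable a b

lemma integral_integral_mul_pow_mul_pow (c : ℝ) (i j : ℕ) :
    ∫ x in (0:ℝ)..1, ∫ t in (0:ℝ)..1, c * (x ^ i * t ^ j) = c / ((i + 1) * (j + 1)) := by
  simp only [intervalIntegral.integral_const_mul, integral_pow, intervalIntegral.integral_mul_const]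
  field_simp
  simp

lemma pow_mul_one_sub_pow_eq_sum {R : Type*} [CommRing R] (x : R) (y m : ℕ) :
    x ^ y * (1 - x) ^ m = ∑ k ∈ range (m + 1), (-1) ^ k * m.choose k * x ^ (y + k) := by
  rw [sub_eq_add_neg, add_comm, add_pow, mul_sum]
  refine sum_congr rfl fun k _ => ?_
  rw [neg_pow, pow_add]
  ring

lemma integral_integral_pow_mul_pow_mul_one_sub_pow (a y m : ℕ) :
    ∫ p2 in (0:ℝ)..1, ∫ p1 in (0:ℝ)..1, p2 ^ a * (p1 * p2) ^ y * (1 - p1 * p2) ^ m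
      = (-1) ^ m * (Δ_[1])^[m] (fun j : ℕ => 1 / (((j : ℝ) + a + 1) * ((j : ℝ) + 1))) y := by
  have hexpand : ∀ p2 p1 : ℝ, p2 ^ a * (p1 * p2) ^ y * (1 - p1 * p2) ^ m
      = ∑ k ∈ range (m + 1), ((-1) ^ k * m.choose k) * (p2 ^ (a + y + k) * p1 ^ (y + k)) := by
    intro p2 p1
    rw [mul_assoc, pow_mul_one_sub_pow_eq_sum, mul_sum]
    refine sum_congr rfl fun k _ => ?_
    ring
  simp_rw [hexpand]
  rw [integral_integral_finsetSum _ _ (fun k _ => by fun_prop),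
    ← sum_range_neg_one_pow_mul_choose_mul]
  refine sum_congr rfl fun k _ => ?_
  rw [integral_integral_mul_pow_mul_pow]
  push_cast
  ring

lemma sum_Icc_inv_eq_H_sub {a b : ℕ} (hab : a ≤ b) :
    ∑ i ∈ Icc (a + 1) b, (i : ℝ)⁻¹ = H b - H a := by
  induction b, hab using Nat.le_induction with
  | base => simp
  | succ b hab ih =>
    rw [sum_Icc_succ_top (by omega), ih, H_succ]
    push_cast
    ring

lemma harmonicMean_Icc_cast {a b : ℕ} (hab : a ≤ b) :
    harmonicMean (Icc (a + 1) b) (fun i => (i : ℝ)) = ((b : ℝ) - a) / (H b - H a) := by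
  rw [harmonicMean, card_Icc, sum_Icc_inv_eq_H_sub hab, mul_inv, inv_inv, Nat.add_sub_add_right,
    Nat.cast_sub hab, div_eq_mul_inv]

theorem posterior_expectation_general (n y : ℕ) (hy : y ≤ n) :
    (∫ p2 in (0:ℝ)..1, ∫ p1 in (0:ℝ)..1,
          p2 * (p1 * p2) ^ y * (1 - p1 * p2) ^ (n - y)) /
        (∫ p2 in (0:ℝ)..1, ∫ p1 in (0:ℝ)..1,
          (p1 * p2) ^ y * (1 - p1 * p2) ^ (n - y))
      = ((n : ℝ) - y + 1) / (((n : ℝ) + 2) * (H (n + 1) - H y)) ∧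
    ((n : ℝ) - y + 1) / (((n : ℝ) + 2) * (H (n + 1) - H y))
      = harmonicMean (Finset.Icc (y + 1) (n + 1)) (fun i => (i : ℝ)) / ((n : ℝ) + 2) := by
  obtain ⟨m, rfl⟩ := Nat.exists_eq_add_of_le hy
  have hnum := integral_integral_pow_mul_pow_mul_one_sub_pow 1 y m
  have hden := integral_integral_pow_mul_pow_mul_one_sub_pow 0 y m
  simp only [pow_one, pow_zero, one_mul, Nat.cast_one, Nat.cast_zero, add_zero] at hnum hden
  rw [Nat.add_sub_cancel_left, hnum, hden, fwdDiff_iter_one_div_succ_succ_mul_succ,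
    fwdDiff_iter_one_div_succ_mul_succ, betaNat_succ_right, mul_div_assoc,
    mul_div_mul_left _ _ (betaNat_pos y m).ne', harmonicMean_Icc_cast (by omega)]
  constructor <;> rw [div_div] <;> push_cast <;> ring

theorem posterior_expectation (n y : ℕ) (hn : 0 < n) (hy : y ≤ n) :
    (∫ p2 in (0:ℝ)..1, ∫ p1 in (0:ℝ)..1,
          p2 * (p1 * p2) ^ y * (1 - p1 * p2) ^ (n - y)) /
        (∫ p2 in (0:ℝ)..1, ∫ p1 in (0:ℝ)..1,
          (p1 * p2) ^ y * (1 - p1 * p2) ^ (n - y))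
      = ((n : ℝ) - y + 1) / (((n : ℝ) + 2) * (H (n + 1) - H y)) ∧
    ((n : ℝ) - y + 1) / (((n : ℝ) + 2) * (H (n + 1) - H y))
      = harmonicMean (Finset.Icc (y + 1) (n + 1)) (fun i => (i : ℝ)) / ((n : ℝ) + 2) :=
  posterior_expectation_general n y hy
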